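/- arXiv:1509.05566 — 2 statements merged into one kernel-verified Lean document; each statement's English description precedes it below -/
import Mathlib

section
/- Let d ≥ 1, p ≥ 0, m ≥ 2 and set C_s := 2^{m-2}(2p+1), C̃ := 1/2 + 2C_s/(1 - 2^{1-m}), C := √d·C̃. Let Q, Q₀, Q₁, …, Q_J be points in ℝ^d with levels ℓ(Q) = ℓ(Q₀)+1 and ℓ(Q_j) = ℓ(Q₀) + j(m-1). Suppose dist(Q,Q₀) = 2^{-ℓ(Q)}·(√d/2) and dist(Q_{j-1},Q_j) ≤ 2^{-ℓ(Q_j)-1}·√d·C_s for all 1 ≤ j ≤ J. Then dist(Q, Q_J) ≤ 2^{-ℓ(Q)}·C. -/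
/-!
Every level of the chain lies `m - 1 ≥ 1` levels below the previous one, so the steps
`dist(Q_{j-1}, Q_j)` shrink geometrically with ratio `r = 2^{1-m} ≤ 1/2`. The triangle inequality
through `Q₀` then bounds `dist(Q, Q_J)` by the first distance plus a geometric series.
-/

open Finset

theorem dist_le_div_of_dist_succ_le_geometric {α : Type*} [PseudoMetricSpace α] {x : ℕ → α}
    {c r : ℝ} {n : ℕ} (hc : 0 ≤ c) (hr0 : 0 ≤ r) (hr1 : r < 1)
    (hx : ∀ k < n, dist (x k) (x (k + 1)) ≤ c * r ^ k) :
    dist (x 0) (x n) ≤ c / (1 - r) :=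
  calc dist (x 0) (x n) ≤ ∑ k ∈ range n, c * r ^ k :=
        dist_le_range_sum_of_dist_le n fun hk => hx _ hk
    _ = c * ∑ k ∈ Ico 0 n, r ^ k := by rw [← mul_sum, Nat.Ico_zero_eq_range]
    _ ≤ c * (r ^ 0 / (1 - r)) := by gcongr; exact geom_sum_Ico_le_of_lt_one hr0 hr1
    _ = c / (1 - r) := by rw [pow_zero, mul_one_div]

theorem zpow_neg_add_mul_sub_one_sub_one {G₀ : Type*} [GroupWithZero G₀] {a : G₀} (ha : a ≠ 0)
    (b m : ℤ) (n : ℕ) :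
    a ^ (-(b + n * (m - 1)) - 1) = a ^ (-(b + 1)) * (a ^ (1 - m)) ^ n := by
  rw [← zpow_natCast (a ^ (1 - m)), ← zpow_mul, ← zpow_add₀ ha]
  ring_nf

theorem refrec_chain_distance_general (d p m : ℕ) (hm : 2 ≤ m) (J : ℕ)
    (Q : EuclideanSpace ℝ (Fin d)) (Qc : ℕ → EuclideanSpace ℝ (Fin d))
    (ℓQ : ℤ) (ℓ : ℕ → ℤ) (ℓ0 : ℤ)
    (hℓQ : ℓQ = ℓ0 + 1) (hℓ : ∀ j, ℓ j = ℓ0 + j * ((m : ℤ) - 1))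
    (hQ : dist Q (Qc 0) = (2 : ℝ) ^ (-ℓQ) * (Real.sqrt d / 2))
    (hchain : ∀ j, 1 ≤ j → j ≤ J →
      dist (Qc (j - 1)) (Qc j) ≤
        (2 : ℝ) ^ (-(ℓ j) - 1) * (Real.sqrt d * ((2 : ℝ) ^ ((m : ℤ) - 2) * (2 * (p : ℝ) + 1)))) :
    dist Q (Qc J) ≤
      (2 : ℝ) ^ (-ℓQ) *
        (Real.sqrt d *
          (1 / 2 + 2 * ((2 : ℝ) ^ ((m : ℤ) - 2) * (2 * (p : ℝ) + 1)) /
            (1 - (2 : ℝ) ^ (1 - (m : ℤ))))) := by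
  subst hℓQ
  set r : ℝ := 2 ^ (1 - (m : ℤ))
  set A : ℝ := 2 ^ (-(ℓ0 + 1)) * (Real.sqrt d * ((2 : ℝ) ^ ((m : ℤ) - 2) * (2 * (p : ℝ) + 1)))
  have hr0 : 0 ≤ r := by positivity
  have hr1 : r < 1 := zpow_lt_one_of_neg₀ one_lt_two (by omega)
  have hstep : ∀ k < J, dist (Qc k) (Qc (k + 1)) ≤ A * r * r ^ k := fun k hk => by
    have h := hchain (k + 1) (by omega) hk
    rwa [Nat.add_sub_cancel, hℓ, zpow_neg_add_mul_sub_one_sub_one two_ne_zero, pow_succ,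
      mul_comm (r ^ k) r, mul_right_comm, ← mul_assoc] at h
  have htail : dist (Qc 0) (Qc J) ≤ A * r / (1 - r) :=
    dist_le_div_of_dist_succ_le_geometric (by positivity) hr0 hr1 hstep
  calc dist Q (Qc J) ≤ dist Q (Qc 0) + dist (Qc 0) (Qc J) := dist_triangle _ _ _
    _ ≤ 2 ^ (-(ℓ0 + 1)) * (Real.sqrt d / 2) + A * r / (1 - r) := by
        rw [hQ]
        exact add_le_add_right htail _
    _ ≤ 2 ^ (-(ℓ0 + 1)) * (Real.sqrt d / 2) + A * 2 / (1 - r) := by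
        have h1r : 0 < 1 - r := sub_pos.mpr hr1
        gcongr
        linarith
    _ = _ := by ring

/-- Abstract version of Lemma 3.2: if `Q` is at distance `2^{-ℓ(Q)}·√d/2` from `Q₀`
and the chain `Q₀,…,Q_J` satisfies `dist(Q_{j-1},Q_j) ≤ 2^{-ℓ(Q_j)-1}·√d·C_s`
with `ℓ(Q_j) = ℓ(Q₀)+j(m-1)`, then `dist(Q,Q_J) ≤ 2^{-ℓ(Q)}·C`. -/
theorem refrec_chain_distance (d p m : ℕ) (hd : 1 ≤ d) (hm : 2 ≤ m) (J : ℕ)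
    (Q : EuclideanSpace ℝ (Fin d)) (Qc : ℕ → EuclideanSpace ℝ (Fin d))
    (ℓQ : ℤ) (ℓ : ℕ → ℤ) (ℓ0 : ℤ)
    (hℓQ : ℓQ = ℓ0 + 1) (hℓ : ∀ j, ℓ j = ℓ0 + j * ((m : ℤ) - 1))
    (hQ : dist Q (Qc 0) = (2 : ℝ) ^ (-ℓQ) * (Real.sqrt d / 2))
    (hchain : ∀ j, 1 ≤ j → j ≤ J →
      dist (Qc (j - 1)) (Qc j) ≤
        (2 : ℝ) ^ (-(ℓ j) - 1) * (Real.sqrt d * ((2 : ℝ) ^ ((m : ℤ) - 2) * (2 * (p : ℝ) + 1)))) :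
    dist Q (Qc J) ≤
      (2 : ℝ) ^ (-ℓQ) *
        (Real.sqrt d *
          (1 / 2 + 2 * ((2 : ℝ) ^ ((m : ℤ) - 2) * (2 * (p : ℝ) + 1)) /
            (1 - (2 : ℝ) ^ (1 - (m : ℤ))))) :=
  refrec_chain_distance_general d p m hm J Q Qc ℓQ ℓ ℓ0 hℓQ hℓ hQ hchain
end

section
/- Let Q_1 and Q_2 be finite partitions of a set D obtained by dyadic refinement from a common initial partition Q_0 (that is, every element of Q_1 and Q_2 is a dyadic descendant of, or equal to, an element of Q_0). Then the overlay Q_* (the coarsest common refinement, whose elements are those elements of Q_1 ∪ Q_2 that are minimal with respect to inclusion) satisfies #Q_* ≤ #Q_1 + #Q_2 − #Q_0. -/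
/-!
Each cube `c₀ ∈ Q₀` contains a cube of `Q₁ ∪ Q₂` that is either not in the overlay or lies in
both `Q₁` and `Q₂`: take the cubes `c₁ ∈ Q₁`, `c₂ ∈ Q₂` through a point of `c₀`; dyadic cubes
through a common point are nested, so if both are inclusion-minimal they coincide. Distinct cubes
of `Q₀` give distinct such witnesses, whence
`#Q₀ ≤ #((Q₁ ∪ Q₂) \ Q_*) + #(Q₁ ∩ Q₂) = #Q₁ + #Q₂ - #Q_*`.
-/

/-- The (half-open) region of a dyadic cube of level `c.1` with integer index `c.2`. -/
def dyadicRegion (d : ℕ) (c : ℕ × (Fin d → ℤ)) : Set (Fin d → ℝ) :=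
  {x | ∀ i, (c.2 i : ℝ) / 2 ^ c.1 ≤ x i ∧ x i < ((c.2 i : ℝ) + 1) / 2 ^ c.1}

/-- `Q` is a partition of `D` by dyadic cubes. -/
def IsDyadicPartition (d : ℕ) (D : Set (Fin d → ℝ)) (Q : Finset (ℕ × (Fin d → ℤ))) : Prop :=
  (⋃ c ∈ Q, dyadicRegion d c) = D ∧
    ∀ c ∈ Q, ∀ c' ∈ Q, c ≠ c' → Disjoint (dyadicRegion d c) (dyadicRegion d c')

open Set Finset

def dyadicInterval (n : ℕ) (k : ℤ) : Set ℝ :=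
  Ico (k / 2 ^ n) ((k + 1) / 2 ^ n)

lemma mem_dyadicInterval_iff {n : ℕ} {k : ℤ} {t : ℝ} :
    t ∈ dyadicInterval n k ↔ ⌊t * 2 ^ n⌋ = k := by
  rw [Int.floor_eq_iff, dyadicInterval, Set.mem_Ico, div_le_iff₀ (by positivity),
    lt_div_iff₀ (by positivity)]

lemma dyadicInterval_nonempty (n : ℕ) (k : ℤ) : (dyadicInterval n k).Nonempty :=
  ⟨k / 2 ^ n, by simp [mem_dyadicInterval_iff]⟩

lemma floor_mul_two_pow_of_le {m n : ℕ} (h : m ≤ n) (t : ℝ) :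
    ⌊t * 2 ^ m⌋ = ⌊t * 2 ^ n⌋ / 2 ^ (n - m) := by
  have : t * 2 ^ m = t * 2 ^ n / (2 ^ (n - m) : ℕ) := by
    rw [eq_div_iff (by positivity), Nat.cast_pow, Nat.cast_ofNat, mul_assoc, ← pow_add,
      Nat.add_sub_cancel' h]
  rw [this, Int.floor_div_natCast]
  norm_cast

lemma dyadicInterval_subset_of_le {m n : ℕ} {k l : ℤ} {t : ℝ} (h : m ≤ n)
    (ht : t ∈ dyadicInterval n k) (ht' : t ∈ dyadicInterval m l) :
    dyadicInterval n k ⊆ dyadicInterval m l := by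
  intro s hs
  rw [mem_dyadicInterval_iff] at *
  rw [floor_mul_two_pow_of_le h, hs, ← ht, ← floor_mul_two_pow_of_le h, ht']

lemma dyadicInterval_inj {m n : ℕ} {k l : ℤ} :
    dyadicInterval n k = dyadicInterval m l ↔ n = m ∧ k = l := by
  refine ⟨fun h => ?_, fun ⟨hn, hk⟩ => hn ▸ hk ▸ rfl⟩
  obtain ⟨hlow, hhigh⟩ := (Ico_eq_Ico_iff (Or.inl (by gcongr; linarith))).1 h
  have hlen : (1 : ℝ) / 2 ^ n = 1 / 2 ^ m := by
    rw [add_div, add_div, hlow] at hhigh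
    linarith
  obtain rfl : n = m := by simpa using hlen
  refine ⟨rfl, ?_⟩
  exact_mod_cast (div_left_inj' (by positivity)).1 hlow

lemma dyadicRegion_eq_pi (d : ℕ) (c : ℕ × (Fin d → ℤ)) :
    dyadicRegion d c = univ.pi fun i => dyadicInterval c.1 (c.2 i) := by
  ext x
  simp [dyadicRegion, dyadicInterval]

lemma dyadicRegion_nonempty (d : ℕ) (c : ℕ × (Fin d → ℤ)) : (dyadicRegion d c).Nonempty := by
  rw [dyadicRegion_eq_pi]
  exact univ_pi_nonempty_iff.2 fun i => dyadicInterval_nonempty _ _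

lemma dyadicRegion_subset_of_le {d : ℕ} {c c' : ℕ × (Fin d → ℤ)} {x : Fin d → ℝ}
    (h : c'.1 ≤ c.1) (hx : x ∈ dyadicRegion d c) (hx' : x ∈ dyadicRegion d c') :
    dyadicRegion d c ⊆ dyadicRegion d c' := by
  simp only [dyadicRegion_eq_pi] at *
  exact pi_mono fun i _ => dyadicInterval_subset_of_le h (hx i trivial) (hx' i trivial)

lemma dyadicRegion_subset_or_subset {d : ℕ} {c c' : ℕ × (Fin d → ℤ)} {x : Fin d → ℝ}
    (hx : x ∈ dyadicRegion d c) (hx' : x ∈ dyadicRegion d c') :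
    dyadicRegion d c ⊆ dyadicRegion d c' ∨ dyadicRegion d c' ⊆ dyadicRegion d c :=
  (le_total c'.1 c.1).imp (dyadicRegion_subset_of_le · hx hx') (dyadicRegion_subset_of_le · hx' hx)

lemma dyadicRegion_injective {d : ℕ} (hd : 0 < d) : Function.Injective (dyadicRegion d) := by
  intro c c' h
  have hi : ∀ i, dyadicInterval c.1 (c.2 i) = dyadicInterval c'.1 (c'.2 i) := fun i => by
    have := congrArg (Function.eval i '' ·) h
    simp only [dyadicRegion_eq_pi] at this
    rwa [eval_image_univ_pi, eval_image_univ_pi] at this <;>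
      exact univ_pi_nonempty_iff.2 fun i => dyadicInterval_nonempty _ _
  exact Prod.ext (dyadicInterval_inj.1 (hi ⟨0, hd⟩)).1
    (funext fun i => (dyadicInterval_inj.1 (hi i)).2)

lemma Finset.card_add_card_le_card_add_card_of_injOn {α β : Type*} [DecidableEq β]
    {s : Finset α} {t₁ t₂ u : Finset β} (hu : u ⊆ t₁ ∪ t₂) (f : α → β)
    (hf : MapsTo f s ↑((t₁ ∪ t₂) \ u ∪ t₁ ∩ t₂)) (f_inj : InjOn f s) :
    #s + #u ≤ #t₁ + #t₂ := by
  have h_inj := Finset.card_le_card_of_injOn f hf f_inj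
  have h_union := Finset.card_union_le ((t₁ ∪ t₂) \ u) (t₁ ∩ t₂)
  have h_sdiff := Finset.card_sdiff_add_card_eq_card hu
  have h_incl_excl := Finset.card_union_add_card_inter t₁ t₂
  omega

namespace IsDyadicPartition

variable {d : ℕ} {D : Set (Fin d → ℝ)} {Q Q₀ : Finset (ℕ × (Fin d → ℤ))}

lemma eq_of_mem_of_mem (hQ : IsDyadicPartition d D Q) {c c' : ℕ × (Fin d → ℤ)}
    {x : Fin d → ℝ} (hc : c ∈ Q) (hc' : c' ∈ Q) (hx : x ∈ dyadicRegion d c)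
    (hx' : x ∈ dyadicRegion d c') : c = c' := by
  by_contra hne
  exact disjoint_left.1 (hQ.2 c hc c' hc' hne) hx hx'

lemma exists_mem_subset_of_refines (h₀ : IsDyadicPartition d D Q₀)
    (hQ : (⋃ c ∈ Q, dyadicRegion d c) = D)
    (hdesc : ∀ c ∈ Q, ∃ c₀ ∈ Q₀, dyadicRegion d c ⊆ dyadicRegion d c₀)
    {c₀ : ℕ × (Fin d → ℤ)} {x : Fin d → ℝ} (hc₀ : c₀ ∈ Q₀) (hx : x ∈ dyadicRegion d c₀) :
    ∃ c ∈ Q, x ∈ dyadicRegion d c ∧ dyadicRegion d c ⊆ dyadicRegion d c₀ := by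
  have hxD : x ∈ ⋃ c ∈ Q, dyadicRegion d c := by
    rw [hQ, ← h₀.1]
    exact mem_biUnion hc₀ hx
  obtain ⟨c, hc, hxc⟩ := mem_iUnion₂.1 hxD
  obtain ⟨c₀', hc₀', hcc₀'⟩ := hdesc c hc
  obtain rfl := h₀.eq_of_mem_of_mem hc₀ hc₀' hx (hcc₀' hxc)
  exact ⟨c, hc, hxc, hcc₀'⟩

end IsDyadicPartition

section Overlay

variable {d : ℕ} {D : Set (Fin d → ℝ)} {Q₀ Q₁ Q₂ Qstar : Finset (ℕ × (Fin d → ℤ))}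

lemma eq_of_mem_overlay_of_subset (hd : 0 < d)
    (hstar : ∀ c, c ∈ Qstar ↔ c ∈ Q₁ ∪ Q₂ ∧
      ∀ c' ∈ Q₁ ∪ Q₂, dyadicRegion d c' ⊆ dyadicRegion d c →
        dyadicRegion d c' = dyadicRegion d c)
    {c c' : ℕ × (Fin d → ℤ)} (hc : c ∈ Qstar) (hc' : c' ∈ Q₁ ∪ Q₂)
    (h : dyadicRegion d c' ⊆ dyadicRegion d c) : c' = c :=
  dyadicRegion_injective hd (((hstar c).1 hc).2 c' hc' h)

lemma exists_subset_mem_sdiff_overlay_or_mem_inter (hd : 0 < d)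
    (h₀ : IsDyadicPartition d D Q₀) (h₁ : (⋃ c ∈ Q₁, dyadicRegion d c) = D)
    (h₂ : (⋃ c ∈ Q₂, dyadicRegion d c) = D)
    (hdesc₁ : ∀ c ∈ Q₁, ∃ c₀ ∈ Q₀, dyadicRegion d c ⊆ dyadicRegion d c₀)
    (hdesc₂ : ∀ c ∈ Q₂, ∃ c₀ ∈ Q₀, dyadicRegion d c ⊆ dyadicRegion d c₀)
    (hstar : ∀ c, c ∈ Qstar ↔ c ∈ Q₁ ∪ Q₂ ∧
      ∀ c' ∈ Q₁ ∪ Q₂, dyadicRegion d c' ⊆ dyadicRegion d c →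
        dyadicRegion d c' = dyadicRegion d c)
    {c₀ : ℕ × (Fin d → ℤ)} (hc₀ : c₀ ∈ Q₀) :
    ∃ c ∈ (Q₁ ∪ Q₂) \ Qstar ∪ Q₁ ∩ Q₂, dyadicRegion d c ⊆ dyadicRegion d c₀ := by
  obtain ⟨x, hx⟩ := dyadicRegion_nonempty d c₀
  obtain ⟨c₁, hc₁, hxc₁, hc₁c₀⟩ := h₀.exists_mem_subset_of_refines h₁ hdesc₁ hc₀ hx
  obtain ⟨c₂, hc₂, hxc₂, hc₂c₀⟩ := h₀.exists_mem_subset_of_refines h₂ hdesc₂ hc₀ hx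
  by_cases hs₁ : c₁ ∈ Qstar
  swap
  · exact ⟨c₁, by simp [hc₁, hs₁], hc₁c₀⟩
  by_cases hs₂ : c₂ ∈ Qstar
  swap
  · exact ⟨c₂, by simp [hc₂, hs₂], hc₂c₀⟩
  obtain rfl : c₁ = c₂ := by
    rcases dyadicRegion_subset_or_subset hxc₁ hxc₂ with h | h
    · exact eq_of_mem_overlay_of_subset hd hstar hs₂ (mem_union_left _ hc₁) h
    · exact (eq_of_mem_overlay_of_subset hd hstar hs₁ (mem_union_right _ hc₂) h).symm
  exact ⟨c₁, by simp [hc₁, hc₂], hc₁c₀⟩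

end Overlay

/-- Overlay estimate: if `Q₁` and `Q₂` are dyadic partitions of `D` refining a common
dyadic partition `Q₀`, then the overlay `Q_*` (the inclusion-minimal elements of
`Q₁ ∪ Q₂`) satisfies `#Q_* ≤ #Q₁ + #Q₂ − #Q₀`. -/
theorem overlay_card_estimate (d : ℕ) (hd : 1 ≤ d) (D : Set (Fin d → ℝ))
    (Q0 Q1 Q2 : Finset (ℕ × (Fin d → ℤ)))
    (h0 : IsDyadicPartition d D Q0) (h1 : IsDyadicPartition d D Q1)
    (h2 : IsDyadicPartition d D Q2)
    (hdesc1 : ∀ c ∈ Q1, ∃ c0 ∈ Q0, dyadicRegion d c ⊆ dyadicRegion d c0)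
    (hdesc2 : ∀ c ∈ Q2, ∃ c0 ∈ Q0, dyadicRegion d c ⊆ dyadicRegion d c0)
    (Qstar : Finset (ℕ × (Fin d → ℤ)))
    (hstar : ∀ c, c ∈ Qstar ↔ c ∈ Q1 ∪ Q2 ∧
      ∀ c' ∈ Q1 ∪ Q2, dyadicRegion d c' ⊆ dyadicRegion d c →
        dyadicRegion d c' = dyadicRegion d c) :
    (Qstar.card : ℤ) ≤ (Q1.card : ℤ) + Q2.card - Q0.card := by
  choose! w hw hw_sub using fun c₀ (hc₀ : c₀ ∈ Q0) =>
    exists_subset_mem_sdiff_overlay_or_mem_inter hd h0 h1.1 h2.1 hdesc1 hdesc2 hstar hc₀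
  have hw_inj : InjOn w Q0 := fun a ha b hb hab => by
    obtain ⟨x, hx⟩ := dyadicRegion_nonempty d (w a)
    exact h0.eq_of_mem_of_mem ha hb (hw_sub a ha hx) (hw_sub b hb (hab ▸ hx))
  have hstar_sub : Qstar ⊆ Q1 ∪ Q2 := fun c hc => ((hstar c).1 hc).1
  have := Finset.card_add_card_le_card_add_card_of_injOn hstar_sub w hw hw_inj
  omega
end
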